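/- arXiv:2602.09560 — 6 statements merged into one kernel-verified Lean document; each statement's English description precedes it below -/
import Mathlib

section
/- The set Ω₄ = {x ∈ ℝ² : ‖x‖ ≤ 5} \ {x ∈ ℝ² : ‖x - (2,0)‖ ≤ 1} is not nearly convex. -/
def NearlyConvex {E : Type*} [AddCommMonoid E] [Module ℝ E] [TopologicalSpace E]
    (Ω : Set E) : Prop :=
  ∃ C : Set E, Convex ℝ C ∧ C ⊆ Ω ∧ Ω ⊆ closure C

theorem omega4_not_nearlyConvex :
    ¬ NearlyConvex
      ({x : EuclideanSpace ℝ (Fin 2) | ‖x‖ ≤ 5} \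
        {x : EuclideanSpace ℝ (Fin 2) | ‖x - (WithLp.equiv 2 (Fin 2 → ℝ)).symm ![2, 0]‖ ≤ 1}) := by
  rintro ⟨C, hC, hCΩ, hΩC⟩
  set c : EuclideanSpace ℝ (Fin 2) := (WithLp.equiv 2 (Fin 2 → ℝ)).symm ![2, 0] with hc
  set p : EuclideanSpace ℝ (Fin 2) := (WithLp.equiv 2 (Fin 2 → ℝ)).symm ![2, 2] with hpdef
  set q : EuclideanSpace ℝ (Fin 2) := (WithLp.equiv 2 (Fin 2 → ℝ)).symm ![2, -2] with hqdef
  have hnp : ‖p‖ = Real.sqrt 8 := by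
    rw [EuclideanSpace.norm_eq]
    norm_num [Fin.sum_univ_two, hpdef]
  have hnq : ‖q‖ = Real.sqrt 8 := by
    rw [EuclideanSpace.norm_eq]
    norm_num [Fin.sum_univ_two, hqdef]
  have h8 : Real.sqrt 8 ≤ 5 := by
    nlinarith [Real.sq_sqrt (by norm_num : (0:ℝ) ≤ 8), Real.sqrt_nonneg 8]
  have hpc : ‖p - c‖ = 2 := by
    have : p - c = (WithLp.equiv 2 (Fin 2 → ℝ)).symm ![0, 2] := by
      apply PiLp.ext; intro i
      fin_cases i <;> simp [hpdef, hc]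
    rw [this, EuclideanSpace.norm_eq]
    norm_num [Fin.sum_univ_two]
  have hqc : ‖q - c‖ = 2 := by
    have : q - c = (WithLp.equiv 2 (Fin 2 → ℝ)).symm ![0, -2] := by
      apply PiLp.ext; intro i
      fin_cases i <;> simp [hqdef, hc]
    rw [this, EuclideanSpace.norm_eq]
    norm_num [Fin.sum_univ_two]
  have hpΩ : p ∈ ({x : EuclideanSpace ℝ (Fin 2) | ‖x‖ ≤ 5} \
        {x : EuclideanSpace ℝ (Fin 2) | ‖x - c‖ ≤ 1}) := by
    constructor
    · simpa [Set.mem_setOf_eq, hnp] using h8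
    · simp [Set.mem_setOf_eq, hpc]
  have hqΩ : q ∈ ({x : EuclideanSpace ℝ (Fin 2) | ‖x‖ ≤ 5} \
        {x : EuclideanSpace ℝ (Fin 2) | ‖x - c‖ ≤ 1}) := by
    constructor
    · simpa [Set.mem_setOf_eq, hnq] using h8
    · simp [Set.mem_setOf_eq, hqc]
  have hmid : c = (1/2 : ℝ) • p + (1/2 : ℝ) • q := by
    apply PiLp.ext; intro i
    fin_cases i <;> simp [hpdef, hqdef, hc] <;> norm_num
  have hcls : c ∈ closure C := by
    rw [hmid]
    exact hC.closure (hΩC hpΩ) (hΩC hqΩ) (by norm_num) (by norm_num) (by norm_num)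
  have hsub : closure C ⊆ {x : EuclideanSpace ℝ (Fin 2) | 1 ≤ ‖x - c‖} := by
    apply closure_minimal
    · intro x hx
      have := (hCΩ hx).2
      simp only [Set.mem_setOf_eq, not_le] at this ⊢
      linarith
    · exact isClosed_le continuous_const ((continuous_id.sub continuous_const).norm)
  have := hsub hcls
  simp [Set.mem_setOf_eq] at this
  linarith
end

section
/- If f : ℝⁿ → ℝ ∪ {+∞} is a proper nearly convex function (proper: dom f ≠ ∅ and f > -∞ everywhere; nearly convex: epi f is a nearly convex set), then its lower semicontinuous hull f̄ is a proper convex function. -/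
def epigraph {E : Type*} (f : E → EReal) : Set (E × ℝ) :=
  {p | f p.1 ≤ (p.2 : EReal)}

noncomputable def lscHull {E : Type*} [TopologicalSpace E] (f : E → EReal) : E → EReal :=
  fun x => sInf ((fun α : ℝ => (α : EReal)) '' {α : ℝ | (x, α) ∈ closure (epigraph f)})

/-! The closure of a nearly convex set `Ω` is the closure of a convex set `C ⊆ Ω`, hence convex;
as the epigraph of `lscHull f` is the closure of `epigraph f`, `lscHull f` is convex, and
`lscHull f ≤ f` gives it a finite value. If `lscHull f x = ⊥`, the whole vertical line over `x`
lies in `closure C`. A relative interior point `p` of `C` sees every point of `closure C` through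
open segments inside `C ⊆ epigraph f`, and the midpoints of `p` and that line fill a vertical
line, forcing `f = ⊥` somewhere. -/

open Set

section RelativeInterior

variable {E : Type*} [NormedAddCommGroup E] [NormedSpace ℝ E] [FiniteDimensional ℝ E]
  {C : Set E}

theorem Convex.exists_openSegment_closure_subset_of_zero_mem (hC : Convex ℝ C)
    (h0 : (0 : E) ∈ C) :
    ∃ p ∈ C, ∀ q ∈ closure C, openSegment ℝ p q ⊆ C := by
  set V := Submodule.span ℝ C
  set C' : Set V := (↑) ⁻¹' C
  have hCV : C ⊆ V := Submodule.subset_span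
  have hC' : Convex ℝ C' := hC.linear_preimage V.subtype
  have h0' : (0 : V) ∈ C' := h0
  have hspan : affineSpan ℝ C' = ⊤ := by
    rw [AffineSubspace.affineSpan_eq_top_iff_vectorSpan_eq_top_of_nonempty ℝ V V ⟨0, h0'⟩,
      vectorSpan_eq_span_vsub_set_right ℝ h0']
    simp only [vsub_eq_sub, sub_zero, image_id']
    exact Submodule.span_span_coe_preimage
  obtain ⟨p, hp⟩ := hC'.interior_nonempty_iff_affineSpan_eq_top.2 hspan
  refine ⟨p, (interior_subset hp : p ∈ C'), fun q hq => ?_⟩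
  have hqV : q ∈ V := closure_minimal hCV V.closed_of_finiteDimensional hq
  have hq' : (⟨q, hqV⟩ : V) ∈ closure C' := by
    rwa [Topology.IsEmbedding.subtypeVal.closure_eq_preimage_closure_image,
      image_preimage_eq_of_subset (by rwa [Subtype.range_val])]
  have hseg := (hC'.openSegment_interior_closure_subset_interior hp hq').trans interior_subset
  have himage := image_openSegment ℝ V.subtype.toAffineMap p ⟨q, hqV⟩
  rw [LinearMap.coe_toAffineMap, Submodule.coe_subtype] at himage
  rwa [← image_subset_iff, himage] at hseg

theorem Convex.exists_openSegment_closure_subset (hC : Convex ℝ C) (hne : C.Nonempty) :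
    ∃ p ∈ C, ∀ q ∈ closure C, openSegment ℝ p q ⊆ C := by
  obtain ⟨c, hc⟩ := hne
  obtain ⟨p, hp, hseg⟩ :=
    (hC.translate_preimage_right c).exists_openSegment_closure_subset_of_zero_mem (by simpa)
  refine ⟨c + p, hp, fun q hq => ?_⟩
  have hq' : -c + q ∈ closure (Homeomorph.addLeft c ⁻¹' C) := by
    rw [← (Homeomorph.addLeft c).preimage_closure]
    simpa using hq
  have := image_subset_iff.2 (hseg _ hq')
  rwa [openSegment_translate_image, add_neg_cancel_left] at this

end RelativeInterior

theorem closure_eq_closure_of_subset_of_subset_closure {X : Type*} [TopologicalSpace X]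
    {s t : Set X} (hst : s ⊆ t) (hts : t ⊆ closure s) : closure t = closure s :=
  (closure_minimal hts isClosed_closure).antisymm (closure_mono hst)

theorem NearlyConvex.convex_closure {E : Type*} [AddCommGroup E] [Module ℝ E] [TopologicalSpace E]
    [IsTopologicalAddGroup E] [ContinuousConstSMul ℝ E] {Ω : Set E} (hΩ : NearlyConvex Ω) :
    Convex ℝ (closure Ω) := by
  obtain ⟨C, hC, hCΩ, hΩC⟩ := hΩ
  rw [closure_eq_closure_of_subset_of_subset_closure hCΩ hΩC]
  exact hC.closure

theorem NearlyConvex.exists_openSegment_closure_subset {E : Type*} [NormedAddCommGroup E]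
    [NormedSpace ℝ E] [FiniteDimensional ℝ E] {Ω : Set E} (hΩ : NearlyConvex Ω)
    (hne : Ω.Nonempty) :
    ∃ p ∈ Ω, ∀ q ∈ closure Ω, openSegment ℝ p q ⊆ Ω := by
  obtain ⟨C, hC, hCΩ, hΩC⟩ := hΩ
  have hCne : C.Nonempty := closure_nonempty_iff.1 (hne.mono hΩC)
  obtain ⟨p, hp, hseg⟩ := hC.exists_openSegment_closure_subset hCne
  rw [closure_eq_closure_of_subset_of_subset_closure hCΩ hΩC]
  exact ⟨p, hCΩ hp, fun q hq => (hseg q hq).trans hCΩ⟩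

section LscHull

variable {E : Type*} [TopologicalSpace E] {f : E → EReal}

theorem mem_closure_epigraph_of_le {x : E} {α β : ℝ} (h : (x, α) ∈ closure (epigraph f))
    (hαβ : α ≤ β) : (x, β) ∈ closure (epigraph f) := by
  have hshift : MapsTo (fun p : E × ℝ => (p.1, p.2 + (β - α))) (epigraph f) (epigraph f) :=
    fun p hp => hp.trans (EReal.coe_le_coe_iff.2 (by linarith))
  simpa using map_mem_closure (by fun_prop) h hshift

theorem lscHull_le_iff {x : E} {α : ℝ} :
    lscHull f x ≤ α ↔ (x, α) ∈ closure (epigraph f) := by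
  refine ⟨fun h => ?_, fun h => sInf_le ⟨α, h, rfl⟩⟩
  set S := {β : ℝ | (x, β) ∈ closure (epigraph f)}
  have hS : IsClosed S := isClosed_closure.preimage (Continuous.prodMk_right x)
  have hIoi : Ioi α ⊆ S := fun β hβ => by
    obtain ⟨_, ⟨γ, hγ, rfl⟩, hγβ⟩ :=
      sInf_lt_iff.1 (h.trans_lt (EReal.coe_lt_coe_iff.2 hβ))
    exact mem_closure_epigraph_of_le hγ (EReal.coe_lt_coe_iff.1 hγβ).le
  have := closure_minimal hIoi hS
  rw [closure_Ioi] at this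
  exact this self_mem_Ici

theorem epigraph_lscHull : epigraph (lscHull f) = closure (epigraph f) :=
  Set.ext fun _ => lscHull_le_iff

theorem lscHull_le_of_le {x : E} {α : ℝ} (h : f x ≤ α) : lscHull f x ≤ α :=
  lscHull_le_iff.2 (subset_closure h)

end LscHull

theorem lscHull_ne_bot {E : Type*} [NormedAddCommGroup E] [NormedSpace ℝ E]
    [FiniteDimensional ℝ E] {f : E → EReal} (hbot : ∀ x, f x ≠ ⊥)
    (hnc : NearlyConvex (epigraph f)) (hne : (epigraph f).Nonempty) (x : E) :
    lscHull f x ≠ ⊥ := by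
  obtain ⟨⟨y, β⟩, -, hseg⟩ := hnc.exists_openSegment_closure_subset hne
  intro hx
  refine hbot (midpoint ℝ y x) ((EReal.eq_bot_iff_forall_lt _).2 fun r => ?_)
  have hq : (x, 2 * (r - 1) - β) ∈ closure (epigraph f) := lscHull_le_iff.1 (by simp [hx])
  have hmid : (midpoint ℝ y x, r - 1) ∈ openSegment ℝ (y, β) (x, 2 * (r - 1) - β) := by
    refine ⟨1 / 2, 1 / 2, by norm_num, by norm_num, by norm_num, ?_⟩
    ext
    · simp [midpoint_eq_smul_add, smul_add]
    · simp only [Prod.smul_mk, smul_eq_mul, Prod.mk_add_mk]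
      ring
  exact (hseg _ hq hmid).trans_lt (EReal.coe_lt_coe_iff.2 (by linarith))

theorem lscHull_proper_convex {n : ℕ}
    (f : EuclideanSpace ℝ (Fin n) → EReal)
    (hbot : ∀ x, f x ≠ ⊥) (hdom : ∃ x, f x ≠ ⊤)
    (hnc : NearlyConvex (epigraph f)) :
    (∀ x, lscHull f x ≠ ⊥) ∧ (∃ x, lscHull f x ≠ ⊤) ∧
      Convex ℝ (epigraph (lscHull f)) := by
  obtain ⟨x₀, hx₀⟩ := hdom
  have hfx₀ : f x₀ ≤ (f x₀).toReal := (EReal.coe_toReal hx₀ (hbot x₀)).ge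
  refine ⟨lscHull_ne_bot hbot hnc ⟨(x₀, _), hfx₀⟩, ⟨x₀, ?_⟩, ?_⟩
  · exact ((lscHull_le_of_le hfx₀).trans_lt (EReal.coe_lt_top _)).ne
  · rw [epigraph_lscHull]
    exact hnc.convex_closure
end

section
/- Let f : ℝⁿ → ℝ ∪ {±∞} be a proper nearly convex function and f̄ its lower semicontinuous hull. Then f̄(x) = f(x) for every x in the relative interior of dom f, and ri(dom f̄) = ri(dom f). -/
open Set Metric

set_option linter.unusedSectionVars false

variable {V : Type*} [NormedAddCommGroup V] [NormedSpace ℝ V] [FiniteDimensional ℝ V]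

lemma mem_intrinsicInterior_iff' {s : Set V} {x : V} :
    x ∈ intrinsicInterior ℝ s ↔
      x ∈ s ∧ ∃ ε > 0, ∀ y ∈ (affineSpan ℝ s : Set V), dist y x < ε → y ∈ s := by
  rw [mem_intrinsicInterior]
  constructor
  · rintro ⟨y, hy, rfl⟩
    refine ⟨(interior_subset hy : y ∈ Subtype.val ⁻¹' s), ?_⟩
    obtain ⟨ε, hε, hball⟩ := Metric.mem_nhds_iff.1 (mem_interior_iff_mem_nhds.1 hy)
    refine ⟨ε, hε, fun w hw hdw => ?_⟩
    have : (⟨w, hw⟩ : affineSpan ℝ s) ∈ Metric.ball y ε := by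
      simpa [Metric.mem_ball, Subtype.dist_eq] using hdw
    exact hball this
  · rintro ⟨hxs, ε, hε, h⟩
    have hxsp : x ∈ affineSpan ℝ s := subset_affineSpan ℝ s hxs
    refine ⟨⟨x, hxsp⟩, ?_, rfl⟩
    rw [mem_interior_iff_mem_nhds, Metric.mem_nhds_iff]
    refine ⟨ε, hε, fun w hw => ?_⟩
    exact h w w.2 (by simpa [Metric.mem_ball, Subtype.dist_eq] using hw)

lemma closure_subset_affineSpan (s : Set V) :
    closure s ⊆ (affineSpan ℝ s : Set V) := by
  have h : IsClosed ((affineSpan ℝ s : Set V)) := (affineSpan ℝ s).closed_of_finiteDimensional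
  exact h.closure_eq ▸ closure_mono (subset_affineSpan ℝ s)

lemma mem_span_of_combo {Q : AffineSubspace ℝ V} {x y z : V} (hx : x ∈ Q) (hy : y ∈ Q)
    (c : ℝ) (hz : z = c • (x - y) + y) : z ∈ Q := by
  subst hz
  exact AffineSubspace.vadd_mem_of_mem_direction
    (Submodule.smul_mem _ c (AffineSubspace.vsub_mem_direction hx hy)) hy

lemma combo_mem_intrinsicInterior {s : Set V} (hs : Convex ℝ s) {x y : V}
    (hx : x ∈ intrinsicInterior ℝ s) (hy : y ∈ closure s) {a b : ℝ}
    (ha : 0 < a) (hb : 0 ≤ b) (hab : a + b = 1) :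
    a • x + b • y ∈ intrinsicInterior ℝ s := by
  rw [mem_intrinsicInterior_iff'] at hx ⊢
  obtain ⟨hxs, ε, hε, hball⟩ := hx
  have hxsp : x ∈ affineSpan ℝ s := subset_affineSpan ℝ s hxs
  have hysp : y ∈ affineSpan ℝ s := closure_subset_affineSpan s hy
  set z := a • x + b • y with hz
  have hzsp : z ∈ affineSpan ℝ s := by
    refine mem_span_of_combo hxsp hysp a ?_
    have hb' : b = 1 - a := by linarith
    rw [hz, hb']; module
  have key : ∀ w ∈ (affineSpan ℝ s : Set V), dist w z < a * ε / 2 → w ∈ s := by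
    intro w hwsp hwd
    -- choose y' ∈ s close to y
    have hbd : 0 < a * ε / 2 := by positivity
    obtain ⟨y', hy's, hy'd⟩ : ∃ y' ∈ s, dist y y' < a * ε / 2 / (b + 1) := by
      have := Metric.mem_closure_iff.1 hy (a * ε / 2 / (b + 1)) (by positivity)
      exact this
    set x' := a⁻¹ • (w - b • y') with hx'
    have hx'x : x' - x = a⁻¹ • ((w - z) + b • (y - y')) := by
      rw [hx', hz]
      have h : a⁻¹ * a = 1 := inv_mul_cancel₀ ha.ne'
      match_scalars <;> field_simp <;> ring
    have hx'sp : x' ∈ affineSpan ℝ s := by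
      have h1 : (w - z) ∈ (affineSpan ℝ s).direction :=
        AffineSubspace.vsub_mem_direction hwsp hzsp
      have h2 : (y - y') ∈ (affineSpan ℝ s).direction :=
        AffineSubspace.vsub_mem_direction hysp (subset_affineSpan ℝ s hy's)
      have h3 : x' - x ∈ (affineSpan ℝ s).direction := by
        rw [hx'x]
        exact Submodule.smul_mem _ _ (Submodule.add_mem _ h1 (Submodule.smul_mem _ _ h2))
      have := AffineSubspace.vadd_mem_of_mem_direction h3 hxsp
      simpa [sub_add_cancel] using this
    have hx'close : dist x' x < ε := by
      rw [dist_eq_norm, hx'x, norm_smul]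
      have hwz : ‖w - z‖ < a * ε / 2 := by rwa [← dist_eq_norm]
      have hyy' : ‖y - y'‖ < a * ε / 2 / (b + 1) := by rwa [← dist_eq_norm]
      have hb1 : b * ‖y - y'‖ ≤ b * (a * ε / 2 / (b + 1)) :=
        mul_le_mul_of_nonneg_left hyy'.le hb
      have hb2 : b * (a * ε / 2 / (b + 1)) < a * ε / 2 := by
        have h1 : b / (b + 1) < 1 := by rw [div_lt_one (by positivity)]; linarith
        calc b * (a * ε / 2 / (b + 1)) = (a * ε / 2) * (b / (b + 1)) := by ring
          _ < (a * ε / 2) * 1 := by exact mul_lt_mul_of_pos_left h1 hbd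
          _ = a * ε / 2 := mul_one _
      have : ‖(w - z) + b • (y - y')‖ < a * ε := by
        calc ‖(w - z) + b • (y - y')‖ ≤ ‖w - z‖ + ‖b • (y - y')‖ := norm_add_le _ _
          _ = ‖w - z‖ + b * ‖y - y'‖ := by rw [norm_smul, Real.norm_of_nonneg hb]
          _ < a * ε / 2 + a * ε / 2 := by linarith
          _ = a * ε := by ring
      calc ‖a⁻¹‖ * ‖(w - z) + b • (y - y')‖ = a⁻¹ * ‖(w - z) + b • (y - y')‖ := by
            rw [Real.norm_of_nonneg (by positivity)]
        _ < a⁻¹ * (a * ε) := by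
            apply mul_lt_mul_of_pos_left this (by positivity)
        _ = ε := by field_simp
    have hx's : x' ∈ s := hball x' hx'sp hx'close
    have hw : w = a • x' + b • y' := by
      rw [hx', smul_smul]
      field_simp
      rw [one_smul, sub_add_cancel]
    rw [hw]
    exact hs hx's hy's ha.le hb hab
  have hzs : z ∈ s := key z hzsp (by simp [dist_self]; positivity)
  exact ⟨hzs, a * ε / 2, by positivity, key⟩

lemma affineSpan_closure_eq' (s : Set V) : affineSpan ℝ (closure s) = affineSpan ℝ s :=
  le_antisymm (affineSpan_le.2 (closure_subset_affineSpan s)) (affineSpan_mono ℝ subset_closure)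

lemma intrinsicInterior_mono_of_span_eq {s t : Set V} (h : s ⊆ t)
    (hsp : affineSpan ℝ s = affineSpan ℝ t) :
    intrinsicInterior ℝ s ⊆ intrinsicInterior ℝ t := by
  intro x hx
  rw [mem_intrinsicInterior_iff'] at hx ⊢
  obtain ⟨hxs, ε, hε, hb⟩ := hx
  exact ⟨h hxs, ε, hε, fun y hy hd => h (hb y (by rw [hsp]; exact hy) hd)⟩

lemma intrinsicInterior_closure_subset {D : Set V} (hD : Convex ℝ D) :
    intrinsicInterior ℝ (closure D) ⊆ intrinsicInterior ℝ D := by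
  intro x hx
  rcases D.eq_empty_or_nonempty with rfl | hne
  · simpa using hx
  obtain ⟨q, hq⟩ := hne.intrinsicInterior hD
  rw [mem_intrinsicInterior_iff'] at hx
  obtain ⟨hxc, ε, hε, hball⟩ := hx
  have hqD : q ∈ D := intrinsicInterior_subset hq
  have hxsp : x ∈ affineSpan ℝ (closure D) := subset_affineSpan ℝ _ hxc
  have hqsp : q ∈ affineSpan ℝ (closure D) :=
    subset_affineSpan ℝ _ (subset_closure hqD)
  set N := ‖x - q‖ with hN
  have hN0 : 0 ≤ N := norm_nonneg _
  set δ := ε / (2 * (N + 1)) with hδ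
  have hδ0 : 0 < δ := by positivity
  set z := δ • (x - q) + x with hz
  have hzsp : z ∈ affineSpan ℝ (closure D) := by
    exact AffineSubspace.vadd_mem_of_mem_direction
      (Submodule.smul_mem _ δ (AffineSubspace.vsub_mem_direction hxsp hqsp)) hxsp
  have hzd : dist z x < ε := by
    rw [hz, dist_eq_norm]
    simp only [add_sub_cancel_right, norm_smul, Real.norm_of_nonneg hδ0.le]
    rw [hδ]
    have h1 : N < N + 1 := by linarith
    calc ε / (2 * (N + 1)) * N ≤ ε / (2 * (N + 1)) * (N + 1) := by
          apply mul_le_mul_of_nonneg_left (by linarith) (by positivity)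
      _ = ε / 2 := by field_simp
      _ < ε := by linarith
  have hzD : z ∈ closure D := hball z hzsp hzd
  have hcombo := combo_mem_intrinsicInterior hD hq hzD
    (a := δ / (1 + δ)) (b := 1 / (1 + δ)) (by positivity) (by positivity) (by field_simp; ring)
  have hx' : (δ / (1 + δ)) • q + (1 / (1 + δ)) • z = x := by
    rw [hz]
    have h : (1 : ℝ) + δ ≠ 0 := by positivity
    match_scalars <;> field_simp <;> ring
  rwa [hx'] at hcombo

lemma intrinsicInterior_eq_of_sandwich {D Ω : Set V} (hD : Convex ℝ D)
    (h1 : D ⊆ Ω) (h2 : Ω ⊆ closure D) :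
    intrinsicInterior ℝ Ω = intrinsicInterior ℝ D := by
  have hsp : affineSpan ℝ Ω = affineSpan ℝ D :=
    le_antisymm (by rw [← affineSpan_closure_eq' D]; exact affineSpan_mono ℝ h2)
      (affineSpan_mono ℝ h1)
  apply subset_antisymm
  · exact (intrinsicInterior_mono_of_span_eq h2
      (by rw [hsp, affineSpan_closure_eq'])).trans (intrinsicInterior_closure_subset hD)
  · exact intrinsicInterior_mono_of_span_eq h1 hsp.symm

lemma exists_coe_of_ne_bot_lt_top {x : EReal} (h1 : x ≠ ⊥) (h2 : x < ⊤) : ∃ a : ℝ, x = a := by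
  induction x with
  | bot => simp at h1
  | coe a => exact ⟨a, rfl⟩
  | top => simp at h2

open Filter Topology in
theorem lscHull_eq_on_ri_dom {n : ℕ}
    (f : EuclideanSpace ℝ (Fin n) → EReal)
    (hbot : ∀ x, f x ≠ ⊥) (hdom : ∃ x, f x ≠ ⊤)
    (hnc : NearlyConvex (epigraph f)) :
    (∀ x ∈ intrinsicInterior ℝ {x | f x < ⊤}, lscHull f x = f x) ∧
      intrinsicInterior ℝ {x | lscHull f x < ⊤} =
        intrinsicInterior ℝ {x | f x < ⊤} := by
  classical
  obtain ⟨C, hCconv, hCsub, hsubC⟩ := hnc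
  have hKeq : closure (epigraph f) = closure C :=
    subset_antisymm (closure_minimal hsubC isClosed_closure) (closure_mono hCsub)
  set D : Set (EuclideanSpace ℝ (Fin n)) := Prod.fst '' C with hDdef
  have hDconv : Convex ℝ D := by
    have := hCconv.linear_image (LinearMap.fst ℝ (EuclideanSpace ℝ (Fin n)) ℝ)
    exact this
  have hreal : ∀ x, f x < ⊤ → ∃ a : ℝ, f x = a := fun x hx =>
    exists_coe_of_ne_bot_lt_top (hbot x) hx
  have hDdom : D ⊆ {x | f x < ⊤} := by
    rintro x ⟨⟨x', α⟩, hmem, rfl⟩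
    exact lt_of_le_of_lt (hCsub hmem) (EReal.coe_lt_top α)
  have hcl : ∀ x : EuclideanSpace ℝ (Fin n), ∀ α : ℝ, (x, α) ∈ closure C → x ∈ closure D := by
    intro x α h
    exact image_closure_subset_closure_image continuous_fst ⟨(x, α), h, rfl⟩
  have hdomcl : {x | f x < ⊤} ⊆ closure D := by
    intro x hx
    obtain ⟨a, ha⟩ := hreal x hx
    have hmem : (x, a) ∈ closure C :=
      hKeq ▸ subset_closure (show f x ≤ (a : EReal) from ha ▸ le_refl _)
    exact hcl x a hmem
  have hridom : intrinsicInterior ℝ {x | f x < ⊤} = intrinsicInterior ℝ D :=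
    intrinsicInterior_eq_of_sandwich hDconv hDdom hdomcl
  -- the key inequality
  have key : ∀ x ∈ intrinsicInterior ℝ D, ∀ α : ℝ, (x, α) ∈ closure C → f x ≤ (α : EReal) := by
    intro x hx α hα
    obtain ⟨hxD, ε, hε, hball⟩ := mem_intrinsicInterior_iff'.1 hx
    obtain ⟨a, ha⟩ := hreal x (hDdom hxD)
    rw [ha, EReal.coe_le_coe_iff]
    have hCne : C.Nonempty := by
      obtain ⟨p, hp, -⟩ := hxD; exact ⟨p, hp⟩
    obtain ⟨q, hq⟩ := hCne.intrinsicInterior hCconv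
    have hqC : q ∈ C := intrinsicInterior_subset hq
    have hyD : q.1 ∈ D := ⟨q, hqC, rfl⟩
    have hxsp : x ∈ affineSpan ℝ D := subset_affineSpan ℝ D hxD
    have hysp : q.1 ∈ affineSpan ℝ D := subset_affineSpan ℝ D hyD
    set N := ‖x - q.1‖ with hN
    have hN0 : (0:ℝ) ≤ N := norm_nonneg _
    set δ := ε / (2 * (N + 1)) with hδ
    have hδ0 : 0 < δ := by positivity
    set z := δ • (x - q.1) + x with hzdef
    have hzsp : z ∈ affineSpan ℝ D :=
      AffineSubspace.vadd_mem_of_mem_direction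
        (Submodule.smul_mem _ δ (AffineSubspace.vsub_mem_direction hxsp hysp)) hxsp
    have hzd : dist z x < ε := by
      rw [hzdef, dist_eq_norm]
      simp only [add_sub_cancel_right, norm_smul, Real.norm_of_nonneg hδ0.le]
      rw [hδ, ← hN]
      calc ε / (2 * (N + 1)) * N ≤ ε / (2 * (N + 1)) * (N + 1) := by
            apply mul_le_mul_of_nonneg_left (by linarith) (by positivity)
        _ = ε / 2 := by field_simp
        _ < ε := by linarith
    have hzD : z ∈ D := hball z hzsp hzd
    obtain ⟨p, hpC, hp1⟩ := hzD
    have hzγC : ((z, p.2) : EuclideanSpace ℝ (Fin n) × ℝ) ∈ C := by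
      have : p = (z, p.2) := by rw [← hp1]
      rwa [← this]
    set r : ℝ → ℝ := fun t =>
      ((1 - t) / (δ + 1 - t)) * p.2 + (δ / (δ + 1 - t)) * ((1 - t) * q.2 + t * α) with hr
    have hineq : ∀ t ∈ Ioo (0:ℝ) 1, a ≤ r t := by
      intro t ht
      obtain ⟨ht0, ht1⟩ := ht
      have hden : (0:ℝ) < δ + 1 - t := by linarith
      set s := (1 - t) / (δ + 1 - t) with hs
      have hs0 : 0 ≤ s := by
        apply div_nonneg (by linarith) hden.le
      have hs1 : s ≤ 1 := by
        rw [hs, div_le_one hden]; linarith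
      have hm := combo_mem_intrinsicInterior hCconv hq hα
        (a := 1 - t) (b := t) (by linarith) ht0.le (by ring)
      have hmC : (1 - t) • q + t • ((x, α) : EuclideanSpace ℝ (Fin n) × ℝ) ∈ C :=
        intrinsicInterior_subset hm
      have hPC : s • ((z, p.2) : EuclideanSpace ℝ (Fin n) × ℝ) +
          (1 - s) • ((1 - t) • q + t • ((x, α) : EuclideanSpace ℝ (Fin n) × ℝ)) ∈ C :=
        hCconv hzγC hmC hs0 (by linarith) (by ring)
      have hfP := hCsub hPC
      have h1 : (s • ((z, p.2) : EuclideanSpace ℝ (Fin n) × ℝ) +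
          (1 - s) • ((1 - t) • q + t • ((x, α) : EuclideanSpace ℝ (Fin n) × ℝ))).1 = x := by
        simp only [Prod.fst_add, Prod.smul_fst]
        rw [hzdef]
        have hdne : δ + 1 - t ≠ 0 := hden.ne'
        match_scalars <;> (rw [hs] ; field_simp ; ring)
      have h2 : (s • ((z, p.2) : EuclideanSpace ℝ (Fin n) × ℝ) +
          (1 - s) • ((1 - t) • q + t • ((x, α) : EuclideanSpace ℝ (Fin n) × ℝ))).2 = r t := by
        simp only [Prod.snd_add, Prod.smul_snd, smul_eq_mul, hr]
        have hdne : δ + 1 - t ≠ 0 := hden.ne'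
        rw [hs]
        field_simp
        ring
      have hfP' : f ((s • ((z, p.2) : EuclideanSpace ℝ (Fin n) × ℝ) +
          (1 - s) • ((1 - t) • q + t • ((x, α) : EuclideanSpace ℝ (Fin n) × ℝ))).1) ≤
          (((s • ((z, p.2) : EuclideanSpace ℝ (Fin n) × ℝ) +
          (1 - s) • ((1 - t) • q + t • ((x, α) : EuclideanSpace ℝ (Fin n) × ℝ))).2 : ℝ) : EReal) :=
        hfP
      rw [h1, h2, ha] at hfP'
      exact EReal.coe_le_coe_iff.1 hfP'
    have hdne : δ + 1 - (1:ℝ) ≠ 0 := by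
      simpa using hδ0.ne'
    have hdcont : ContinuousAt (fun t : ℝ => δ + 1 - t) 1 := by fun_prop
    have hcont : ContinuousAt r 1 := by
      rw [hr]
      exact (((continuousAt_const.sub continuousAt_id).div hdcont hdne).mul
          continuousAt_const).add ((continuousAt_const.div hdcont hdne).mul
          (((continuousAt_const.sub continuousAt_id).mul continuousAt_const).add
            (continuousAt_id.mul continuousAt_const)))
    have hval : r 1 = α := by
      rw [hr]
      simp only [sub_self, zero_div, zero_mul, zero_add, one_mul, zero_mul]
      have : δ + 1 - (1:ℝ) = δ := by ring
      rw [this, div_self hδ0.ne']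
      ring
    have hev : ∀ᶠ t in 𝓝[<] (1:ℝ), a ≤ r t := by
      filter_upwards [Ioo_mem_nhdsLT (zero_lt_one)] with t ht using hineq t ht
    exact ge_of_tendsto ((hval ▸ hcont.tendsto).mono_left nhdsWithin_le_nhds) hev
  -- part 1
  have part1 : ∀ x ∈ intrinsicInterior ℝ {x | f x < ⊤}, lscHull f x = f x := by
    intro x hx
    rw [hridom] at hx
    have hxD : x ∈ D := intrinsicInterior_subset hx
    obtain ⟨a, ha⟩ := hreal x (hDdom hxD)
    have hub : lscHull f x ≤ f x := by
      have hmem : (a : EReal) ∈ (fun α : ℝ => (α : EReal)) ''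
          {α : ℝ | (x, α) ∈ closure (epigraph f)} :=
        ⟨a, subset_closure (show f x ≤ (a : EReal) from ha ▸ le_refl _), rfl⟩
      calc lscHull f x ≤ (a : EReal) := sInf_le hmem
        _ = f x := ha.symm
    have hlb : f x ≤ lscHull f x := by
      apply le_sInf
      rintro b ⟨α, hαmem, rfl⟩
      exact key x hx α (hKeq ▸ hαmem)
    exact le_antisymm hub hlb
  refine ⟨part1, ?_⟩
  have hdomF1 : D ⊆ {x | lscHull f x < ⊤} := by
    intro x hxD
    obtain ⟨a, ha⟩ := hreal x (hDdom hxD)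
    have hmem : (a : EReal) ∈ (fun α : ℝ => (α : EReal)) ''
        {α : ℝ | (x, α) ∈ closure (epigraph f)} :=
      ⟨a, subset_closure (show f x ≤ (a : EReal) from ha ▸ le_refl _), rfl⟩
    exact lt_of_le_of_lt (sInf_le hmem) (EReal.coe_lt_top a)
  have hdomF2 : {x | lscHull f x < ⊤} ⊆ closure D := by
    intro x hx
    have hne : {α : ℝ | (x, α) ∈ closure (epigraph f)}.Nonempty := by
      by_contra h
      rw [Set.not_nonempty_iff_eq_empty] at h
      simp only [Set.mem_setOf_eq, lscHull, h, Set.image_empty, sInf_empty] at hx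
      exact lt_irrefl _ hx
    obtain ⟨α, hα⟩ := hne
    exact hcl x α (hKeq ▸ hα)
  rw [intrinsicInterior_eq_of_sandwich hDconv hdomF1 hdomF2, hridom]
end

section
/- Let f : ℝⁿ → ℝ ∪ {+∞} be a proper nearly convex function and D ⊆ ℝⁿ a nonempty nearly convex set with ri(D) ∩ ri(dom f) ≠ ∅. Then inf{f(x) : x ∈ D} = inf{f̄(x) : x ∈ closure D}, where f̄ is the lower semicontinuous hull of f. -/
open Set Metric

section Aux
variable {E : Type*} [NormedAddCommGroup E] [NormedSpace ℝ E]

lemma combo_mem_span {Q : AffineSubspace ℝ E} {a b : E} (ha : a ∈ Q) (hb : b ∈ Q) (t : ℝ) :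
    t • a + (1 - t) • b ∈ Q := by
  have h := AffineSubspace.smul_vsub_vadd_mem Q t ha hb hb
  have he : t • a + (1 - t) • b = t • (a -ᵥ b) +ᵥ b := by
    simp only [vsub_eq_sub, vadd_eq_add]; module
  rw [he]; exact h

lemma mem_ri_iff {s : Set E} {x : E} :
    x ∈ intrinsicInterior ℝ s ↔
      x ∈ affineSpan ℝ s ∧ ∃ ε > 0, ∀ y ∈ (affineSpan ℝ s : Set E), dist y x < ε → y ∈ s := by
  constructor
  · rintro ⟨y, hy, rfl⟩
    refine ⟨y.2, ?_⟩
    rw [mem_interior_iff_mem_nhds, Metric.mem_nhds_iff] at hy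
    obtain ⟨ε, hε, hball⟩ := hy
    exact ⟨ε, hε, fun z hz hd => hball (show (⟨z, hz⟩ : affineSpan ℝ s) ∈ ball y ε by
      rw [mem_ball, Subtype.dist_eq]; exact hd)⟩
  · rintro ⟨hx, ε, hε, h⟩
    refine ⟨⟨x, hx⟩, ?_, rfl⟩
    rw [mem_interior_iff_mem_nhds, Metric.mem_nhds_iff]
    exact ⟨ε, hε, fun z hz => h z z.2 (by simpa [Subtype.dist_eq] using hz)⟩

variable [FiniteDimensional ℝ E]

lemma closure_subset_span {s : Set E} : closure s ⊆ (affineSpan ℝ s : Set E) :=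
  closure_minimal (subset_affineSpan ℝ s) (affineSpan ℝ s).closed_of_finiteDimensional


lemma openSeg_mem_ri {s : Set E} (hs : Convex ℝ s) {u v : E}
    (hu : u ∈ intrinsicInterior ℝ s) (hv : v ∈ closure s) {t : ℝ}
    (ht0 : 0 < t) (ht1 : t ≤ 1) :
    t • u + (1 - t) • v ∈ intrinsicInterior ℝ s := by
  rw [mem_ri_iff] at hu ⊢
  obtain ⟨hus, ε, hε, hball⟩ := hu
  have hvs : v ∈ affineSpan ℝ s := closure_subset_span hv
  set w := t • u + (1 - t) • v with hw
  refine ⟨combo_mem_span hus hvs t, t * ε / 2, by positivity, fun y hy hyw => ?_⟩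
  obtain ⟨v', hv's, hv'⟩ := Metric.mem_closure_iff.1 hv (t * ε / 2) (by positivity)
  set u' := (1 / t) • y + (1 - 1 / t) • v' with hu'
  have hid : u' - u = (1 / t) • (y - w) + ((1 - t) / t) • (v - v') := by
    rw [hu', hw]
    match_scalars <;> field_simp <;> ring
  have hdist : dist u' u < ε := by
    rw [dist_eq_norm, hid]
    have h1 : ‖y - w‖ < t * ε / 2 := by rwa [← dist_eq_norm]
    have h2 : ‖v - v'‖ < t * ε / 2 := by rw [← dist_eq_norm]; exact hv'
    calc ‖(1 / t) • (y - w) + ((1 - t) / t) • (v - v')‖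
        ≤ ‖(1 / t) • (y - w)‖ + ‖((1 - t) / t) • (v - v')‖ := norm_add_le _ _
      _ = (1 / t) * ‖y - w‖ + ((1 - t) / t) * ‖v - v'‖ := by
          rw [norm_smul, norm_smul, Real.norm_eq_abs, Real.norm_eq_abs,
            abs_of_pos (by positivity), abs_of_nonneg (by apply div_nonneg <;> linarith)]
      _ = (‖y - w‖ + (1 - t) * ‖v - v'‖) / t := by ring
      _ < ε := by
          rw [div_lt_iff₀ ht0]
          nlinarith [norm_nonneg (y - w), norm_nonneg (v - v')]
  have hu's : u' ∈ s :=
    hball u' (combo_mem_span hy (subset_affineSpan ℝ s hv's) (1 / t)) hdist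
  have hyid : y = t • u' + (1 - t) • v' := by
    rw [hu']
    match_scalars <;> field_simp <;> ring
  rw [hyid]
  exact hs hu's hv's (le_of_lt ht0) (by linarith) (by ring)


lemma extend_mem_span {Q : AffineSubspace ℝ E} {z p : E} (hz : z ∈ Q) (hp : p ∈ Q) (s : ℝ) :
    z + s • (z - p) ∈ Q := by
  have h := AffineSubspace.smul_vsub_vadd_mem Q s hz hp hz
  have he : z + s • (z - p) = s • (z -ᵥ p) +ᵥ z := by
    simp only [vsub_eq_sub, vadd_eq_add]; module
  rw [he]; exact h

lemma extend_point (z p : E) {ε : ℝ} (hε : 0 < ε) :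
    ∃ s : ℝ, 0 < s / (1 + s) ∧ s / (1 + s) < 1 ∧
      dist (z + s • (z - p)) z < ε ∧
      z = (s / (1 + s)) • p + (1 - s / (1 + s)) • (z + s • (z - p)) := by
  set s := ε / (2 * (‖z - p‖ + 1)) with hs
  have hs0 : 0 < s := by positivity
  have h1s : (0:ℝ) < 1 + s := by linarith
  refine ⟨s, by positivity, ?_, ?_, ?_⟩
  · rw [div_lt_one h1s]; linarith
  · have : dist (z + s • (z - p)) z = s * ‖z - p‖ := by
      rw [dist_eq_norm]
      have : z + s • (z - p) - z = s • (z - p) := by module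
      rw [this, norm_smul, Real.norm_eq_abs, abs_of_pos hs0]
    rw [this, hs]
    rw [div_mul_eq_mul_div, div_lt_iff₀ (by positivity)]
    nlinarith [norm_nonneg (z - p)]
  · have h1s' : (1:ℝ) + s ≠ 0 := ne_of_gt h1s
    match_scalars <;> field_simp <;> ring

lemma closure_eq_of_nearly {C Ω : Set E} (h1 : C ⊆ Ω) (h2 : Ω ⊆ closure C) :
    closure Ω = closure C :=
  subset_antisymm (by simpa using closure_mono h2) (closure_mono h1)

lemma span_eq_of_nearly {C Ω : Set E} (h1 : C ⊆ Ω) (h2 : Ω ⊆ closure C) :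
    affineSpan ℝ Ω = affineSpan ℝ C :=
  le_antisymm (affineSpan_le.2 (h2.trans closure_subset_span)) (affineSpan_mono ℝ h1)

lemma ri_eq_of_nearly {C Ω : Set E} (hC : Convex ℝ C) (h1 : C ⊆ Ω) (h2 : Ω ⊆ closure C) :
    intrinsicInterior ℝ Ω = intrinsicInterior ℝ C := by
  rcases C.eq_empty_or_nonempty with rfl | hne
  · have hΩ : Ω = ∅ := subset_eq_empty (h2.trans (by simp)) rfl
    rw [hΩ]
  · have hsp := span_eq_of_nearly h1 h2
    apply subset_antisymm
    · intro x hx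
      rw [mem_ri_iff] at hx
      obtain ⟨hxs, ε, hε, hb⟩ := hx
      obtain ⟨p, hp⟩ := hne.intrinsicInterior hC
      have hpspan : p ∈ affineSpan ℝ C := subset_affineSpan ℝ C (intrinsicInterior_subset hp)
      have hxC : x ∈ affineSpan ℝ C := hsp ▸ hxs
      obtain ⟨s, hgt0, hlt1, hd, hid⟩ := extend_point x p hε
      have hx'span : x + s • (x - p) ∈ affineSpan ℝ Ω := by
        rw [hsp]; exact extend_mem_span hxC hpspan s
      have hx'cl : x + s • (x - p) ∈ closure C := h2 (hb _ hx'span hd)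
      have h3 := openSeg_mem_ri hC hp hx'cl hgt0 (le_of_lt hlt1)
      rw [← hid] at h3; exact h3
    · intro x hx
      rw [mem_ri_iff] at hx ⊢
      obtain ⟨hxs, ε, hε, hb⟩ := hx
      refine ⟨hsp ▸ hxs, ε, hε, fun y hy hd => h1 (hb y ?_ hd)⟩
      rw [hsp] at hy; exact hy


end Aux

theorem optimal_values_eq {n : ℕ}
    (f : EuclideanSpace ℝ (Fin n) → EReal)
    (hbot : ∀ x, f x ≠ ⊥) (hdom : ∃ x, f x ≠ ⊤)
    (hnc : NearlyConvex (epigraph f))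
    (D : Set (EuclideanSpace ℝ (Fin n))) (hD : D.Nonempty) (hDnc : NearlyConvex D)
    (hreg : (intrinsicInterior ℝ D ∩ intrinsicInterior ℝ {x | f x < ⊤}).Nonempty) :
    ⨅ x ∈ D, f x = ⨅ x ∈ closure D, lscHull f x := by
  classical
  obtain ⟨C, hCconv, hC1, hC2⟩ := hnc
  obtain ⟨CD, hCDconv, hCD1, hCD2⟩ := hDnc
  have hclD : closure D = closure CD := closure_eq_of_nearly hCD1 hCD2
  have hriD : intrinsicInterior ℝ D = intrinsicInterior ℝ CD :=
    ri_eq_of_nearly hCDconv hCD1 hCD2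
  have hclepi : closure (epigraph f) = closure C := closure_eq_of_nearly hC1 hC2
  -- epigraph is nonempty, hence C is nonempty
  obtain ⟨x0, hx0⟩ := hdom
  obtain ⟨r0, hr0⟩ : ∃ r : ℝ, f x0 = r := ⟨(f x0).toReal, (EReal.coe_toReal hx0 (hbot x0)).symm⟩
  have hepi0 : (x0, r0) ∈ epigraph f := le_of_eq hr0
  have hCne : C.Nonempty := by
    by_contra h
    rw [not_nonempty_iff_eq_empty] at h
    subst h
    simpa using hC2 hepi0
  obtain ⟨pq, hpq⟩ := hCne.intrinsicInterior hCconv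
  -- the effective domain and the projection of C
  set K : Set (EuclideanSpace ℝ (Fin n)) := Prod.fst '' C with hK
  have hKconv : Convex ℝ K := hCconv.linear_image (LinearMap.fst ℝ _ _)
  have hK1 : K ⊆ {x | f x < ⊤} := by
    rintro _ ⟨⟨a, b⟩, hab, rfl⟩
    exact lt_of_le_of_lt (hC1 hab) (EReal.coe_lt_top b)
  have hK2 : {x | f x < ⊤} ⊆ closure K := by
    intro x hx
    have hne : f x ≠ ⊤ := ne_of_lt hx
    obtain ⟨r, hr⟩ : ∃ r : ℝ, f x = r := ⟨(f x).toReal, (EReal.coe_toReal hne (hbot x)).symm⟩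
    have hmem : (x, r) ∈ closure C := hC2 (le_of_eq hr)
    exact image_closure_subset_closure_image continuous_fst ⟨(x, r), hmem, rfl⟩
  have hriDom : intrinsicInterior ℝ {x | f x < ⊤} = intrinsicInterior ℝ K :=
    ri_eq_of_nearly hKconv hK1 hK2
  obtain ⟨z, hzD, hzdom⟩ := hreg
  have hzK : z ∈ intrinsicInterior ℝ K := hriDom ▸ hzdom
  rw [mem_ri_iff] at hzK
  obtain ⟨hzspan, ε, hε, hzb⟩ := hzK
  have hpqK : pq.1 ∈ K := ⟨pq, intrinsicInterior_subset hpq, rfl⟩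
  have hpqspan : pq.1 ∈ affineSpan ℝ K := subset_affineSpan _ _ hpqK
  obtain ⟨s, hs0, hs1, hd, hid⟩ := extend_point z pq.1 hε
  set t : ℝ := s / (1 + s) with ht
  have hz'K : z + s • (z - pq.1) ∈ K := hzb _ (extend_mem_span hzspan hpqspan s) hd
  obtain ⟨⟨z'', β'⟩, hz'C, hz''⟩ := hz'K
  have hz''eq : z'' = z + s • (z - pq.1) := hz''
  have hz'cl : ((z + s • (z - pq.1), β') : EuclideanSpace ℝ (Fin n) × ℝ) ∈ closure C :=
    subset_closure (hz''eq ▸ hz'C)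
  have hcombo := openSeg_mem_ri hCconv hpq hz'cl hs0 (le_of_lt hs1)
  set β : ℝ := t * pq.2 + (1 - t) * β' with hβ
  have hzβ : ((z, β) : EuclideanSpace ℝ (Fin n) × ℝ) ∈ intrinsicInterior ℝ C := by
    have hpair : ((z, β) : EuclideanSpace ℝ (Fin n) × ℝ) =
        t • pq + (1 - t) • ((z + s • (z - pq.1), β') : EuclideanSpace ℝ (Fin n) × ℝ) := by
      rw [Prod.ext_iff]
      constructor
      · simpa using hid
      · simp [hβ, smul_eq_mul]
    rw [hpair]
    exact hcombo
  -- Now the two inequalities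
  apply le_antisymm
  · apply le_iInf₂
    intro x hx
    simp only [lscHull]
    apply le_sInf
    rintro b ⟨α, hα, rfl⟩
    have hxcl : ((x, α) : EuclideanSpace ℝ (Fin n) × ℝ) ∈ closure C := hclepi ▸ hα
    have key : ∀ θ : ℝ, 0 < θ → θ ≤ 1 →
        (⨅ y ∈ D, f y) ≤ ((θ * β + (1 - θ) * α : ℝ) : EReal) := by
      intro θ h0 h1
      have hmem : θ • ((z, β) : EuclideanSpace ℝ (Fin n) × ℝ) + (1 - θ) • ((x, α)) ∈ C :=
        intrinsicInterior_subset (openSeg_mem_ri hCconv hzβ hxcl h0 h1)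
      have hpair : θ • ((z, β) : EuclideanSpace ℝ (Fin n) × ℝ) + (1 - θ) • ((x, α)) =
          (θ • z + (1 - θ) • x, θ * β + (1 - θ) * α) := by
        rw [Prod.ext_iff]; constructor <;> simp [smul_eq_mul]
      rw [hpair] at hmem
      have hfepi : f (θ • z + (1 - θ) • x) ≤ ((θ * β + (1 - θ) * α : ℝ) : EReal) := hC1 hmem
      have hmemD : θ • z + (1 - θ) • x ∈ D := by
        have hh := openSeg_mem_ri hCDconv (hriD ▸ hzD) (hclD ▸ hx) h0 h1
        exact hCD1 (intrinsicInterior_subset hh)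
      calc (⨅ y ∈ D, f y) ≤ f (θ • z + (1 - θ) • x) := iInf₂_le _ hmemD
        _ ≤ _ := hfepi
    have hcont : Filter.Tendsto (fun θ : ℝ => θ * β + (1 - θ) * α) (nhds 0)
        (nhds ((0 : ℝ) * β + (1 - 0) * α)) := (Continuous.tendsto ((continuous_id.mul continuous_const).add ((continuous_const.sub continuous_id).mul continuous_const)) 0)
    have hcont' : Filter.Tendsto (fun θ : ℝ => θ * β + (1 - θ) * α) (nhds 0) (nhds α) := by
      simpa using hcont
    have htend : Filter.Tendsto (fun θ : ℝ => ((θ * β + (1 - θ) * α : ℝ) : EReal))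
        (nhdsWithin 0 (Set.Ioi 0)) (nhds (α : EReal)) :=
      (continuous_coe_real_ereal.tendsto α).comp (tendsto_nhdsWithin_of_tendsto_nhds hcont')
    refine ge_of_tendsto htend ?_
    filter_upwards [Ioc_mem_nhdsGT (zero_lt_one)] with θ hθ
    exact key θ hθ.1 hθ.2
  · apply le_iInf₂
    intro x hx
    refine le_trans (iInf₂_le x (subset_closure hx)) ?_
    by_cases htop : f x = ⊤
    · rw [htop]; exact le_top
    · obtain ⟨r, hr⟩ : ∃ r : ℝ, f x = r := ⟨(f x).toReal, (EReal.coe_toReal htop (hbot x)).symm⟩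
      simp only [lscHull]
      rw [hr]
      exact sInf_le ⟨r, subset_closure (show (x, r) ∈ epigraph f from le_of_eq hr), rfl⟩
end

section
/- Let f : ℝⁿ → ℝ ∪ {+∞} be a proper nearly convex function and D a nonempty nearly convex set with ri(D) ∩ ri(dom f) ≠ ∅. Then every global minimizer of f on D is a global minimizer of f̄ on closure(D), i.e., the solution set of the original problem is contained in that of the associated convex problem. -/
open Set

variable {E : Type*} [NormedAddCommGroup E] [NormedSpace ℝ E]

/-- epsilon-characterization of relative-interior membership -/
def riCh (C : Set E) (z : E) : Prop :=
  z ∈ (affineSpan ℝ C : Set E) ∧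
    ∃ ε > 0, ∀ y ∈ (affineSpan ℝ C : Set E), dist y z < ε → y ∈ C

lemma riCh.mem {C : Set E} {z : E} (h : riCh C z) : z ∈ C := by
  obtain ⟨h1, ε, hε, h2⟩ := h
  exact h2 z h1 (by simpa using hε)

lemma riCh_of_intrinsic {C : Set E} {z : E} (h : z ∈ intrinsicInterior ℝ C) : riCh C z := by
  obtain ⟨zh, hzh, rfl⟩ := h
  refine ⟨zh.2, ?_⟩
  rw [mem_interior_iff_mem_nhds, Metric.mem_nhds_iff] at hzh
  obtain ⟨ε, hε, hball⟩ := hzh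
  refine ⟨ε, hε, fun y hy hdy => ?_⟩
  have : (⟨y, hy⟩ : affineSpan ℝ C) ∈ Metric.ball zh ε := by
    simpa [Metric.mem_ball, Subtype.dist_eq] using hdy
  exact hball this

lemma riCh_comb [FiniteDimensional ℝ E] {C : Set E} (hC : Convex ℝ C) {x y : E}
    (hx : riCh C x) (hy : y ∈ closure C) {t : ℝ} (ht0 : 0 < t) (ht1 : t < 1) :
    riCh C (t • x + (1 - t) • y) := by
  obtain ⟨hxA, ε, hε, hball⟩ := hx
  have hclA : closure C ⊆ (affineSpan ℝ C : Set E) :=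
    closure_minimal (subset_affineSpan ℝ C) (affineSpan ℝ C).closed_of_finiteDimensional
  have hyA : y ∈ (affineSpan ℝ C : Set E) := hclA hy
  constructor
  · have h1 : t • (x -ᵥ y) +ᵥ y ∈ affineSpan ℝ C :=
      (affineSpan ℝ C).smul_vsub_vadd_mem t hxA hyA hyA
    have : t • x + (1 - t) • y = t • (x - y) + y := by
      rw [smul_sub, sub_smul, one_smul]; abel
    rw [this]
    simpa [vsub_eq_sub, vadd_eq_add] using h1
  · refine ⟨t * ε / 2, by positivity, fun q hq hdq => ?_⟩
    obtain ⟨y', hy'C, hy'd⟩ : ∃ y' ∈ C, dist y y' < t * ε / 4 := by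
      rw [Metric.mem_closure_iff] at hy
      exact hy _ (by positivity)
    have hy'A : y' ∈ (affineSpan ℝ C : Set E) := subset_affineSpan ℝ C hy'C
    set x' : E := t⁻¹ • (q - (1 - t) • y') with hx'def
    have hx'A : x' ∈ (affineSpan ℝ C : Set E) := by
      have h1 : t⁻¹ • (q -ᵥ y') +ᵥ y' ∈ affineSpan ℝ C :=
        (affineSpan ℝ C).smul_vsub_vadd_mem t⁻¹ hq hy'A hy'A
      have : x' = t⁻¹ • (q - y') + y' := by
        rw [hx'def]
        match_scalars <;> field_simp <;> ring
      rw [this]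
      simpa [vsub_eq_sub, vadd_eq_add] using h1
    have hx'C : x' ∈ C := by
      apply hball x' hx'A
      have heq : x' - x = t⁻¹ • ((q - (t • x + (1 - t) • y)) + (1 - t) • (y - y')) := by
        rw [hx'def]
        match_scalars <;> field_simp <;> ring <;> ring
      have hn : ‖x' - x‖ ≤ t⁻¹ * (‖q - (t • x + (1 - t) • y)‖ + (1 - t) * ‖y - y'‖) := by
        rw [heq, norm_smul, Real.norm_eq_abs, abs_of_pos (by positivity)]
        gcongr
        calc ‖(q - (t • x + (1 - t) • y)) + (1 - t) • (y - y')‖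
            ≤ ‖q - (t • x + (1 - t) • y)‖ + ‖(1 - t) • (y - y')‖ := norm_add_le _ _
          _ = ‖q - (t • x + (1 - t) • y)‖ + (1 - t) * ‖y - y'‖ := by
              rw [norm_smul, Real.norm_eq_abs, abs_of_pos (by linarith)]
      have h1 : ‖q - (t • x + (1 - t) • y)‖ < t * ε / 2 := by
        rw [← dist_eq_norm]; exact hdq
      have h2 : ‖y - y'‖ < t * ε / 4 := by rw [← dist_eq_norm]; exact hy'd
      have h3 : ‖q - (t • x + (1 - t) • y)‖ + (1 - t) * ‖y - y'‖ < t * ε * 3 / 4 := by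
        nlinarith [norm_nonneg (y - y')]
      rw [dist_eq_norm]
      calc ‖x' - x‖ ≤ t⁻¹ * (‖q - (t • x + (1 - t) • y)‖ + (1 - t) * ‖y - y'‖) := hn
        _ < t⁻¹ * (t * ε * 3 / 4) := by
            exact (mul_lt_mul_iff_right₀ (by positivity)).mpr h3
        _ = 3 * ε / 4 := by field_simp
        _ < ε := by linarith
    have hqeq : q = t • x' + (1 - t) • y' := by
      rw [hx'def]
      match_scalars <;> field_simp <;> ring
    rw [hqeq]
    exact hC hx'C hy'C (le_of_lt ht0) (by linarith) (by ring)

lemma riCh_of_closure_ball [FiniteDimensional ℝ E] {C : Set E} (hC : Convex ℝ C) {w z : E}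
    (hw : riCh C w) (hzA : z ∈ (affineSpan ℝ C : Set E)) {ε : ℝ} (hε : 0 < ε)
    (hball : ∀ y ∈ (affineSpan ℝ C : Set E), dist y z < ε → y ∈ closure C) : riCh C z := by
  obtain ⟨hwA, -⟩ := id hw
  set δ : ℝ := ε / (2 * (‖z - w‖ + 1)) with hδdef
  have hδ : 0 < δ := by positivity
  set z' : E := z + δ • (z - w) with hz'def
  have hz'A : z' ∈ (affineSpan ℝ C : Set E) := by
    have h1 : δ • (z -ᵥ w) +ᵥ z ∈ affineSpan ℝ C :=
      (affineSpan ℝ C).smul_vsub_vadd_mem δ hzA hwA hzA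
    have : z' = δ • (z - w) + z := by rw [hz'def]; abel
    rw [this]
    simpa [vsub_eq_sub, vadd_eq_add] using h1
  have hz'cl : z' ∈ closure C := by
    apply hball z' hz'A
    have : dist z' z = δ * ‖z - w‖ := by
      rw [hz'def, dist_eq_norm]
      simp [norm_smul, abs_of_pos hδ]
    rw [this, hδdef]
    rw [div_mul_eq_mul_div, div_lt_iff₀ (by positivity)]
    nlinarith [norm_nonneg (z - w)]
  set t : ℝ := δ / (1 + δ) with htdef
  have ht0 : 0 < t := by positivity
  have ht1 : t < 1 := by rw [htdef, div_lt_one (by linarith)]; linarith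
  have hzeq : z = t • w + (1 - t) • z' := by
    rw [hz'def, htdef]
    match_scalars <;> field_simp <;> ring <;> ring
  rw [hzeq]
  exact riCh_comb hC hw hz'cl ht0 ht1

lemma riCh_core [FiniteDimensional ℝ E] {C Ω : Set E} {z : E} (hC : Convex ℝ C)
    (hsub : C ⊆ Ω) (hcl : Ω ⊆ closure C) (hz : z ∈ intrinsicInterior ℝ Ω) : riCh C z := by
  have hclA : closure C ⊆ (affineSpan ℝ C : Set E) :=
    closure_minimal (subset_affineSpan ℝ C) (affineSpan ℝ C).closed_of_finiteDimensional
  have hspan : (affineSpan ℝ Ω : Set E) = (affineSpan ℝ C : Set E) := by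
    apply le_antisymm
    · exact (affineSpan_le (k := ℝ)).mpr (fun a ha => hclA (hcl ha))
    · exact affineSpan_mono ℝ hsub
  have hCne : C.Nonempty := by
    have hΩne : Ω.Nonempty := ⟨z, intrinsicInterior_subset hz⟩
    obtain ⟨a, ha⟩ := hΩne
    rcases closure_nonempty_iff.mp ⟨a, hcl ha⟩ with ⟨c, hc⟩
    exact ⟨c, hc⟩
  obtain ⟨w, hw⟩ := Set.Nonempty.intrinsicInterior hC hCne
  obtain ⟨hzA, ε, hε, hball⟩ := riCh_of_intrinsic hz
  refine riCh_of_closure_ball hC (riCh_of_intrinsic hw) (hspan ▸ hzA) hε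
    (fun y hy hdy => hcl (hball y (hspan ▸ hy) hdy))

theorem sol_subset_sol_assoc {n : ℕ}
    (f : EuclideanSpace ℝ (Fin n) → EReal)
    (hbot : ∀ x, f x ≠ ⊥) (hdom : ∃ x, f x ≠ ⊤)
    (hnc : NearlyConvex (epigraph f))
    (D : Set (EuclideanSpace ℝ (Fin n))) (hD : D.Nonempty) (hDnc : NearlyConvex D)
    (hreg : (intrinsicInterior ℝ D ∩ intrinsicInterior ℝ {x | f x < ⊤}).Nonempty)
    (xb : EuclideanSpace ℝ (Fin n)) (hxb : xb ∈ D)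
    (hmin : ∀ x ∈ D, f xb ≤ f x) :
    xb ∈ closure D ∧ ∀ x ∈ closure D, lscHull f xb ≤ lscHull f x := by
  refine ⟨subset_closure hxb, fun x hx => ?_⟩
  obtain ⟨C, hCcv, hCD, hDC⟩ := hDnc
  obtain ⟨K, hKcv, hKsub, hKcl⟩ := hnc
  obtain ⟨z, hzD, hzdom⟩ := hreg
  have hzD' : z ∈ D := intrinsicInterior_subset hzD
  have hzdom'' : z ∈ {x | f x < ⊤} := intrinsicInterior_subset hzdom
  have hzdom' : f z < ⊤ := hzdom''
  have hfxb_lt : f xb < ⊤ := lt_of_le_of_lt (hmin z hzD') hzdom'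
  set r : ℝ := (f xb).toReal with hrdef
  have hfr : ((r : ℝ) : EReal) = f xb := EReal.coe_toReal (ne_of_lt hfxb_lt) (hbot xb)
  -- closure of epigraph equals closure of K
  have hclK : closure (epigraph f) = closure K := by
    apply Set.Subset.antisymm
    · have := closure_mono hKcl
      rwa [closure_closure] at this
    · exact closure_mono hKsub
  -- x lies in closure C
  have hxC : x ∈ closure C := by
    have := closure_mono hDC hx
    rwa [closure_closure] at this
  -- relative interior point of C
  have hriC : riCh C z := riCh_core hCcv hCD hDC hzD
  -- relative interior data for dom f
  obtain ⟨hzAf, εf, hεf, hballf⟩ := riCh_of_intrinsic hzdom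
  -- K is nonempty, get an intrinsic interior point of K
  have hKne : K.Nonempty := by
    obtain ⟨x₀, hx₀⟩ := hdom
    have hx₀e : (x₀, (f x₀).toReal) ∈ epigraph f := by
      show f x₀ ≤ _
      rw [EReal.coe_toReal hx₀ (hbot x₀)]
    exact closure_nonempty_iff.mp ⟨_, hKcl hx₀e⟩
  obtain ⟨wp, hwp⟩ := Set.Nonempty.intrinsicInterior hKcv hKne
  have hwK : riCh K wp := riCh_of_intrinsic hwp
  set w : EuclideanSpace ℝ (Fin n) := wp.1 with hwdef
  set γ : ℝ := wp.2 with hγdef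
  have hwepi : f w ≤ (γ : EReal) := hKsub hwK.mem
  have hwdom : w ∈ {x | f x < ⊤} := lt_of_le_of_lt hwepi (by exact_mod_cast lt_top_iff_ne_top.mpr (EReal.coe_ne_top γ))
  have hwAf : w ∈ (affineSpan ℝ {x | f x < ⊤} : Set (EuclideanSpace ℝ (Fin n))) :=
    subset_affineSpan ℝ _ hwdom
  -- construct the point z' beyond z in dom f
  set δ : ℝ := εf / (2 * (‖z - w‖ + 1)) with hδdef
  have hδ : 0 < δ := by positivity
  set z' := z + δ • (z - w) with hz'def
  have hz'A : z' ∈ (affineSpan ℝ {x | f x < ⊤} : Set (EuclideanSpace ℝ (Fin n))) := by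
    have h1 : δ • (z -ᵥ w) +ᵥ z ∈ affineSpan ℝ {x | f x < ⊤} :=
      (affineSpan ℝ _).smul_vsub_vadd_mem δ hzAf hwAf hzAf
    have : z' = δ • (z - w) + z := by rw [hz'def]; abel
    rw [this]
    simpa [vsub_eq_sub, vadd_eq_add] using h1
  have hz'dom : z' ∈ {x | f x < ⊤} := by
    apply hballf z' hz'A
    have hd : dist z' z = δ * ‖z - w‖ := by
      rw [hz'def, dist_eq_norm]
      simp [norm_smul, abs_of_pos hδ]
    rw [hd, hδdef, div_mul_eq_mul_div, div_lt_iff₀ (by positivity)]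
    nlinarith [norm_nonneg (z - w)]
  set β' : ℝ := (f z').toReal with hβ'def
  have hz'epi : ((z', β') : EuclideanSpace ℝ (Fin n) × ℝ) ∈ epigraph f := by
    show f z' ≤ _
    rw [hβ'def, EReal.coe_toReal (ne_of_lt hz'dom) (hbot z')]
  set t₀ : ℝ := δ / (1 + δ) with ht₀def
  have ht₀0 : 0 < t₀ := by positivity
  have ht₀1 : t₀ < 1 := by rw [ht₀def, div_lt_one (by linarith)]; linarith
  have hP : riCh K (t₀ • wp + (1 - t₀) • ((z', β') : EuclideanSpace ℝ (Fin n) × ℝ)) :=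
    riCh_comb hKcv hwK (hKcl hz'epi) ht₀0 ht₀1
  set β : ℝ := t₀ * γ + (1 - t₀) * β' with hβdef
  have hPeq : t₀ • wp + (1 - t₀) • ((z', β') : EuclideanSpace ℝ (Fin n) × ℝ) = (z, β) := by
    have h1 : t₀ • w + (1 - t₀) • z' = z := by
      rw [hz'def, ht₀def]
      match_scalars <;> field_simp <;> ring
    apply Prod.ext
    · simpa using h1
    · simp [hβdef, smul_eq_mul, hγdef]
  rw [hPeq] at hP
  -- key inequality
  have key : ∀ α : ℝ, (x, α) ∈ closure (epigraph f) → r ≤ α := by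
    intro α hxα
    have hxαK : ((x, α) : EuclideanSpace ℝ (Fin n) × ℝ) ∈ closure K := hclK ▸ hxα
    have step : ∀ t : ℝ, 0 < t → t < 1 → r ≤ t * β + (1 - t) * α := by
      intro t ht0 ht1
      -- the combined point lies in K hence in the epigraph
      have hQ : (t • ((z, β) : EuclideanSpace ℝ (Fin n) × ℝ) + (1 - t) • (x, α)) ∈ K :=
        (riCh_comb hKcv hP hxαK ht0 ht1).mem
      have hQepi := hKsub hQ
      have hQeq : (t • ((z, β) : EuclideanSpace ℝ (Fin n) × ℝ) + (1 - t) • (x, α)) =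
          (t • z + (1 - t) • x, t * β + (1 - t) * α) := by
        apply Prod.ext <;> simp [smul_eq_mul]
      rw [hQeq] at hQepi
      have hxtD : t • z + (1 - t) • x ∈ D :=
        hCD (riCh_comb hCcv hriC hxC ht0 ht1).mem
      have hineq : f xb ≤ ((t * β + (1 - t) * α : ℝ) : EReal) :=
        le_trans (hmin _ hxtD) hQepi
      rw [← hfr] at hineq
      exact_mod_cast hineq
    -- let t → 0
    refine le_of_forall_pos_le_add fun ε hε => ?_
    set A : ℝ := |β - α| with hAdef
    have hA : 0 ≤ A := abs_nonneg _
    set t : ℝ := min (1/2) (ε / (A + 1)) with htdef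
    have ht0 : 0 < t := lt_min (by norm_num) (by positivity)
    have ht1 : t < 1 := lt_of_le_of_lt (min_le_left _ _) (by norm_num)
    have hstep := step t ht0 ht1
    have htle : t ≤ ε / (A + 1) := min_le_right _ _
    have h1 : t * (β - α) ≤ t * A := by
      apply mul_le_mul_of_nonneg_left (le_abs_self _) (le_of_lt ht0)
    have h2 : t * A ≤ (ε / (A + 1)) * A := mul_le_mul_of_nonneg_right htle hA
    have h3 : (ε / (A + 1)) * A ≤ ε := by
      rw [div_mul_eq_mul_div, div_le_iff₀ (by positivity)]
      nlinarith
    nlinarith [hstep]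
  -- conclude
  have h1 : lscHull f xb ≤ ((r : ℝ) : EReal) := by
    apply sInf_le
    exact ⟨r, subset_closure (show f xb ≤ ((r:ℝ):EReal) from hfr ▸ le_refl _), rfl⟩
  have h2 : ((r : ℝ) : EReal) ≤ lscHull f x := by
    apply le_sInf
    rintro b ⟨α, hα, rfl⟩
    show ((r : ℝ) : EReal) ≤ ((α : ℝ) : EReal)
    exact_mod_cast key α hα
  exact le_trans h1 h2
end

section
/- Let f : ℝⁿ → ℝ ∪ {+∞} be a proper nearly convex function and D a nonempty nearly convex set with ri(D) ∩ ri(dom f) ≠ ∅. If x̄ ∈ D ∩ ri(dom f) is a global minimizer of f̄ over closure(D), then x̄ is a global minimizer of f over D. -/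
open Set Topology Filter

-- ball characterization of intrinsic interior (forward direction)
lemma ri_ball {F : Type*} [NormedAddCommGroup F] [NormedSpace ℝ F] {s : Set F} {z : F}
    (hz : z ∈ intrinsicInterior ℝ s) :
    ∃ ε > 0, ∀ w ∈ affineSpan ℝ s, dist w z < ε → w ∈ s := by
  obtain ⟨q, hq, rfl⟩ := hz
  rw [mem_interior_iff_mem_nhds, nhds_subtype, Filter.mem_comap] at hq
  obtain ⟨U, hU, hUs⟩ := hq
  obtain ⟨ε, hε, hball⟩ := Metric.mem_nhds_iff.mp hU
  refine ⟨ε, hε, fun w hw hdist => ?_⟩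
  have : (⟨w, hw⟩ : affineSpan ℝ s) ∈ (↑) ⁻¹' U := hball (by simpa [Metric.mem_ball] using hdist)
  exact hUs this

lemma comboA {F : Type*} [NormedAddCommGroup F] [NormedSpace ℝ F] [FiniteDimensional ℝ F]
    {C : Set F} (hC : Convex ℝ C) {z p : F}
    (hz : z ∈ intrinsicInterior ℝ C) (hp : p ∈ closure C) {t : ℝ}
    (ht : 0 < t) (ht1 : t ≤ 1) : t • z + (1 - t) • p ∈ C := by
  rcases eq_or_lt_of_le ht1 with h1 | h1
  · subst h1; simpa using intrinsicInterior_subset hz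
  have h1t : 0 < 1 - t := by linarith
  have ht0 : t ≠ 0 := ht.ne'
  have h1t0 : 1 - t ≠ 0 := h1t.ne'
  obtain ⟨ε, hε, hball⟩ := ri_ball hz
  have hδ : 0 < ε * t / (1 - t) := div_pos (mul_pos hε ht) h1t
  obtain ⟨q, hqC, hdq⟩ := Metric.mem_closure_iff.mp hp _ hδ
  set z' := z + ((1 - t) / t) • (p - q) with hz'
  have hz'A : z' ∈ affineSpan ℝ C := by
    have hzA : z ∈ affineSpan ℝ C := subset_affineSpan ℝ C (intrinsicInterior_subset hz)
    have hqA : q ∈ affineSpan ℝ C := subset_affineSpan ℝ C hqC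
    have hpA : p ∈ affineSpan ℝ C := by
      have : IsClosed ((affineSpan ℝ C : Set F)) := (affineSpan ℝ C).closed_of_finiteDimensional
      exact this.closure_subset_iff.mpr (subset_affineSpan ℝ C) hp
    have := AffineSubspace.smul_vsub_vadd_mem (affineSpan ℝ C) ((1 - t) / t) hpA hqA hzA
    simpa [hz', vsub_eq_sub, vadd_eq_add, add_comm] using this
  have hz'C : z' ∈ C := by
    apply hball _ hz'A
    have : dist z' z = ((1 - t) / t) * dist p q := by
      rw [hz', dist_eq_norm, add_sub_cancel_left, norm_smul, Real.norm_eq_abs,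
        abs_of_nonneg (div_nonneg h1t.le ht.le), dist_eq_norm]
    rw [this]
    calc ((1 - t) / t) * dist p q < ((1 - t) / t) * (ε * t / (1 - t)) := by
          apply mul_lt_mul_of_pos_left hdq (div_pos h1t ht)
      _ = ε := by field_simp; try ring
  have := hC hz'C hqC ht.le (by linarith : (0:ℝ) ≤ 1 - t) (by ring)
  have heq : t • z' + (1 - t) • q = t • z + (1 - t) • p := by
    rw [hz']
    match_scalars <;> field_simp <;> ring
  rwa [heq] at this

lemma comboB {F : Type*} [NormedAddCommGroup F] [NormedSpace ℝ F] [FiniteDimensional ℝ F]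
    {C : Set F} (hC : Convex ℝ C) {z p q : F}
    (hz : z ∈ intrinsicInterior ℝ C) (hp : p ∈ closure C) (hq : q ∈ closure C)
    {a b c : ℝ} (ha : 0 < a) (hb : 0 ≤ b) (hc : 0 ≤ c) (habc : a + b + c = 1) :
    a • z + b • p + c • q ∈ C := by
  rcases eq_or_lt_of_le (add_nonneg hb hc) with hbc | hbc
  · have hb0 : b = 0 := by linarith
    have hc0 : c = 0 := by linarith
    have ha1 : a = 1 := by linarith
    simpa [hb0, hc0, ha1] using intrinsicInterior_subset hz
  · have hm : (b / (b + c)) • p + (c / (b + c)) • q ∈ closure C :=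
      hC.closure hp hq (by positivity) (by positivity) (by field_simp)
    have := comboA hC hz hm ha (by linarith)
    have heq : a • z + (1 - a) • ((b / (b + c)) • p + (c / (b + c)) • q)
        = a • z + b • p + c • q := by
      have h1a : 1 - a = b + c := by linarith
      rw [h1a]
      match_scalars <;> field_simp
    rwa [heq] at this


theorem sol_assoc_to_sol {n : ℕ}
    (f : EuclideanSpace ℝ (Fin n) → EReal)
    (hbot : ∀ x, f x ≠ ⊥) (hdom : ∃ x, f x ≠ ⊤)
    (hnc : NearlyConvex (epigraph f))
    (D : Set (EuclideanSpace ℝ (Fin n))) (hD : D.Nonempty) (hDnc : NearlyConvex D)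
    (hreg : (intrinsicInterior ℝ D ∩ intrinsicInterior ℝ {x | f x < ⊤}).Nonempty)
    (xb : EuclideanSpace ℝ (Fin n)) (hxb : xb ∈ D)
    (hxbri : xb ∈ intrinsicInterior ℝ {x | f x < ⊤})
    (hmin : ∀ x ∈ closure D, lscHull f xb ≤ lscHull f x) :
    ∀ x ∈ D, f xb ≤ f x := by
  intro x hx
  have hlsc_le : ∀ z, lscHull f z ≤ f z := by
    intro z
    by_cases hz : f z = ⊤
    · rw [hz]; exact le_top
    · have hzr : ((f z).toReal : EReal) = f z := EReal.coe_toReal hz (hbot z)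
      rw [← hzr]
      exact sInf_le ⟨(f z).toReal, subset_closure (by simp [epigraph, hzr]), rfl⟩
  have hkey : f xb ≤ lscHull f xb := by
    apply le_sInf
    rintro _ ⟨α, hα, rfl⟩
    -- hα : (xb, α) ∈ closure (epigraph f)
    obtain ⟨C, hCc, hCsub, hsubC⟩ := hnc
    have hPC : (xb, α) ∈ closure C :=
      closure_minimal hsubC isClosed_closure hα
    have hCne : C.Nonempty := by
      obtain ⟨x0, hx0⟩ := hdom
      have hmem : (x0, (f x0).toReal) ∈ epigraph f := by
        simp [epigraph, EReal.coe_toReal hx0 (hbot x0)]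
      exact closure_nonempty_iff.mp ⟨_, hsubC hmem⟩
    obtain ⟨r, hr⟩ := Set.Nonempty.intrinsicInterior hCc hCne
    set y := r.1 with hy
    set β := r.2 with hβ
    have hrC : r ∈ C := intrinsicInterior_subset hr
    have hyf : f y ≤ (β : EReal) := hCsub hrC
    have hydom : y ∈ {x | f x < ⊤} := lt_of_le_of_lt hyf (EReal.coe_lt_top β)
    obtain ⟨ε, hε, hball⟩ := ri_ball hxbri
    have hxbdom : xb ∈ {x | f x < ⊤} := intrinsicInterior_subset hxbri
    set δ := ε / (2 * (‖xb - y‖ + 1)) with hδdef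
    have hδ : 0 < δ := by positivity
    set w := xb + δ • (xb - y) with hw
    have hwdom : w ∈ {x | f x < ⊤} := by
      apply hball
      · have h1 : xb ∈ affineSpan ℝ {x | f x < ⊤} := subset_affineSpan ℝ _ hxbdom
        have h2 : y ∈ affineSpan ℝ {x | f x < ⊤} := subset_affineSpan ℝ _ hydom
        have := AffineSubspace.smul_vsub_vadd_mem (affineSpan ℝ {x | f x < ⊤}) δ h1 h2 h1
        simpa [hw, vsub_eq_sub, vadd_eq_add, add_comm] using this
      · rw [hw, dist_eq_norm, add_sub_cancel_left, norm_smul, Real.norm_eq_abs,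
          abs_of_nonneg hδ.le]
        have hB : (0:ℝ) ≤ ‖xb - y‖ := norm_nonneg _
        have hBne : ‖xb - y‖ + 1 ≠ 0 := by positivity
        have : δ * (‖xb - y‖ + 1) = ε / 2 := by
          rw [hδdef]; field_simp; try ring
        nlinarith
    have hwtop : f w ≠ ⊤ := hwdom.ne
    set γ := (f w).toReal with hγ
    have hQ : (w, γ) ∈ closure C := by
      apply hsubC
      simp [epigraph, hγ, EReal.coe_toReal hwtop (hbot w)]
    set g : ℝ → ℝ := fun t => (δ * t * β + t * γ + δ * (1 - t) * α) / (t + δ) with hg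
    have hbound : ∀ t ∈ Set.Ioo (0:ℝ) 1, f xb ≤ (g t : EReal) := by
      rintro t ⟨ht0, ht1⟩
      have hT : 0 < t + δ := by linarith
      have hT0 : t + δ ≠ 0 := hT.ne'
      have ha : 0 < δ * t / (t + δ) := by positivity
      have hb : 0 ≤ t / (t + δ) := by positivity
      have hc : 0 ≤ δ * (1 - t) / (t + δ) :=
        div_nonneg (mul_nonneg hδ.le (by linarith)) hT.le
      have habc : δ * t / (t + δ) + t / (t + δ) + δ * (1 - t) / (t + δ) = 1 := by
        field_simp; try ring
      have hmem := comboB hCc hr hQ hPC ha hb hc habc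
      have hZ : (δ * t / (t + δ)) • r + (t / (t + δ)) • ((w, γ) : EuclideanSpace ℝ (Fin n) × ℝ)
          + (δ * (1 - t) / (t + δ)) • ((xb, α) : EuclideanSpace ℝ (Fin n) × ℝ)
          = (xb, g t) := by
        apply Prod.ext
        · simp only [Prod.fst_add, Prod.smul_fst]
          rw [show r.1 = y from rfl, hw]
          match_scalars <;> (field_simp; try ring)
        · simp only [Prod.snd_add, Prod.smul_snd, smul_eq_mul, hg]
          rw [show r.2 = β from rfl]
          field_simp; try ring
      rw [hZ] at hmem
      have := hCsub hmem
      simpa [epigraph] using this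
    have hcg : ContinuousAt g 0 := by
      apply ContinuousAt.div (by fun_prop) (by fun_prop)
      simpa using hδ.ne'
    have hg00 : g 0 = α := by
      simp only [hg]
      field_simp
      ring
    have htend : Filter.Tendsto (fun t => (g t : EReal)) (𝓝[>] (0:ℝ)) (𝓝 (α : EReal)) := by
      have h1 : Filter.Tendsto g (𝓝[>] (0:ℝ)) (𝓝 α) := by
        rw [← hg00]
        exact hcg.continuousWithinAt.tendsto
      exact (continuous_coe_real_ereal.continuousAt.tendsto).comp h1
    apply ge_of_tendsto htend
    filter_upwards [Ioo_mem_nhdsGT_of_mem (Set.mem_Ico.mpr ⟨le_refl 0, one_pos⟩)] with t ht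
    exact hbound t ht
  calc f xb ≤ lscHull f xb := hkey
    _ ≤ lscHull f x := hmin x (subset_closure hx)
    _ ≤ f x := hlsc_le x
end
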